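/- arXiv:gr-qc/0303025 — 3 statements merged into one kernel-verified Lean document; each statement's English description precedes it below -/
import Mathlib

section
/- Assume (I⁻(p), I⁺(p)) ∈ R_pf for every p ∈ M. Let P̄ = (P,P*) and Q̄ = (Q,Q*) be elements of R_pf with P ≠ Q, and let C ⊆ M satisfy P = ⋃_{x∈C} I⁻(x). Then it is not the case that both Q̄ ∈ L⁻({P̄}) and Q̄ ∈ L⁺({Φ(x)}) for every x ∈ C. -/
open Set Topology

variable {M : Type*}

/-- Chronological past of a point: `I⁻(p) = {q | q ≪ p}`. -/
def Iminus (ll : M → M → Prop) (p : M) : Set M := {q | ll q p}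

/-- Chronological future of a point: `I⁺(p) = {q | p ≪ q}`. -/
def Iplus (ll : M → M → Prop) (p : M) : Set M := {q | ll p q}

/-- `I⁻[S] = ⋃_{p ∈ S} I⁻(p)`. -/
def IminusS (ll : M → M → Prop) (S : Set M) : Set M := ⋃ p ∈ S, Iminus ll p

/-- `I⁺[S] = ⋃_{p ∈ S} I⁺(p)`. -/
def IplusS (ll : M → M → Prop) (S : Set M) : Set M := ⋃ p ∈ S, Iplus ll p

/-- A past set is the past of some set. -/
def IsPastSet (ll : M → M → Prop) (P : Set M) : Prop := ∃ S : Set M, P = IminusS ll S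

/-- A future set is the future of some set. -/
def IsFutureSet (ll : M → M → Prop) (F : Set M) : Prop := ∃ S : Set M, F = IplusS ll S

/-- An IP: a nonempty past set that is not the union of two past sets that are
proper subsets of it. -/
def IsIP (ll : M → M → Prop) (P : Set M) : Prop :=
  IsPastSet ll P ∧ P.Nonempty ∧
    ¬ ∃ A B : Set M, IsPastSet ll A ∧ IsPastSet ll B ∧ A ⊂ P ∧ B ⊂ P ∧ P = A ∪ B

/-- An IF: a nonempty future set that is not the union of two future sets that are
proper subsets of it. -/
def IsIF (ll : M → M → Prop) (F : Set M) : Prop :=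
  IsFutureSet ll F ∧ F.Nonempty ∧
    ¬ ∃ A B : Set M, IsFutureSet ll A ∧ IsFutureSet ll B ∧ A ⊂ F ∧ B ⊂ F ∧ F = A ∪ B

/-- The common future `f(P)` of a past set. -/
def commonFuture (ll : M → M → Prop) (P : Set M) : Set M :=
  ⋃ x ∈ {x : M | P ⊆ Iminus ll x}, Iplus ll x

/-- The common past `p(F)` of a future set. -/
def commonPast (ll : M → M → Prop) (F : Set M) : Set M :=
  ⋃ x ∈ {x : M | F ⊆ Iplus ll x}, Iminus ll x

/-- The relation `R_pf`: pairs `(P, P*)` of an IP and an IF, each maximal in the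
common future/past of the other. -/
def Rpf (ll : M → M → Prop) : Set (Set M × Set M) :=
  {PP | IsIP ll PP.1 ∧ IsIF ll PP.2 ∧
    PP.2 ⊆ commonFuture ll PP.1 ∧
    (¬ ∃ R : Set M, IsIF ll R ∧ R ≠ PP.2 ∧ PP.2 ⊆ R ∧ R ⊆ commonFuture ll PP.1) ∧
    PP.1 ⊆ commonPast ll PP.2 ∧
    (¬ ∃ R : Set M, IsIP ll R ∧ R ≠ PP.1 ∧ PP.1 ⊆ R ∧ R ⊆ commonPast ll PP.2)}

/-- The causal completion `M̄`. -/
def Mbar (ll : M → M → Prop) : Set (Set M × Set M) :=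
  {PP | PP ∈ Rpf ll ∨
    (PP.1 = ∅ ∧ IsIF ll PP.2 ∧ ¬ ∃ P : Set M, (P, PP.2) ∈ Rpf ll) ∨
    (PP.2 = ∅ ∧ IsIP ll PP.1 ∧ ¬ ∃ F : Set M, (PP.1, F) ∈ Rpf ll)}

/-- The chronology `≪_C` on pairs: `(P,P*) ≪_C (Q,Q*)` iff `P* ∩ Q ≠ ∅`. -/
def chronC (PP QQ : Set M × Set M) : Prop := (PP.2 ∩ QQ.1).Nonempty

/-- The natural map `Φ : M → M̄`, `Φ(p) = (I⁻(p), I⁺(p))`. -/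
def Phi (ll : M → M → Prop) (p : M) : Set M × Set M := (Iminus ll p, Iplus ll p)

/-- The chronology `≪` is dense. -/
def IsDenseChron (ll : M → M → Prop) : Prop := ∀ p q : M, ll p q → ∃ r : M, ll p r ∧ ll r q

/-- `I⁺_C(P̄) = {R̄ ∈ M̄ : P̄ ≪_C R̄}`. -/
def IplusC (ll : M → M → Prop) (PP : Set M × Set M) : Set (Set M × Set M) :=
  {RR | RR ∈ Mbar ll ∧ chronC PP RR}

/-- `I⁻_C(P̄) = {R̄ ∈ M̄ : R̄ ≪_C P̄}`. -/
def IminusC (ll : M → M → Prop) (PP : Set M × Set M) : Set (Set M × Set M) :=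
  {RR | RR ∈ Mbar ll ∧ chronC RR PP}

/-- `I⁺_C(S̄) = {Q̄ ∈ M̄ : ∃ P̄ ∈ S̄, P̄ ≪_C Q̄}`. -/
def IplusCS (ll : M → M → Prop) (S : Set (Set M × Set M)) : Set (Set M × Set M) :=
  {QQ | QQ ∈ Mbar ll ∧ ∃ PP ∈ S, chronC PP QQ}

/-- `I⁻_C(S̄) = {Q̄ ∈ M̄ : ∃ P̄ ∈ S̄, Q̄ ≪_C P̄}`. -/
def IminusCS (ll : M → M → Prop) (S : Set (Set M × Set M)) : Set (Set M × Set M) :=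
  {QQ | QQ ∈ Mbar ll ∧ ∃ PP ∈ S, chronC QQ PP}

/-- The causality `≺_C` defined from the chronology. -/
def causC (ll : M → M → Prop) (PP QQ : Set M × Set M) : Prop :=
  IminusC ll PP ⊆ IminusC ll QQ ∧ IplusC ll QQ ⊆ IplusC ll PP

/-- The horismos `→_C` defined from `≺_C` and `≪_C`. -/
def horC (ll : M → M → Prop) (PP QQ : Set M × Set M) : Prop :=
  causC ll PP QQ ∧ ¬ chronC PP QQ

/-- `L⁺_IF(S̄) = {Q̄ ∈ M̄ : Q* ≠ ∅ and Q* ⊆ ⋃_{P̄ ∈ S̄} P*}`. -/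
def LplusIF (ll : M → M → Prop) (S : Set (Set M × Set M)) : Set (Set M × Set M) :=
  {QQ | QQ ∈ Mbar ll ∧ QQ.2 ≠ ∅ ∧ QQ.2 ⊆ ⋃ PP ∈ S, PP.2}

/-- `L⁻_IP(S̄) = {Q̄ ∈ M̄ : Q ≠ ∅ and Q ⊆ ⋃_{P̄ ∈ S̄} P}`. -/
def LminusIP (ll : M → M → Prop) (S : Set (Set M × Set M)) : Set (Set M × Set M) :=
  {QQ | QQ ∈ Mbar ll ∧ QQ.1 ≠ ∅ ∧ QQ.1 ⊆ ⋃ PP ∈ S, PP.1}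

/-- `Q = lim P_n` for a sequence of past sets. -/
def limPast (ll : M → M → Prop) (Pn : ℕ → Set M) (Q : Set M) : Prop :=
  (∀ x ∈ Q, ∃ N : ℕ, ∀ n > N, x ∈ Pn n) ∧
  (∀ x : M, ¬ Iminus ll x ⊆ Q → ∃ N : ℕ, ∀ n > N, ¬ Iminus ll x ⊆ Pn n)

/-- `Q = lim F_n` for a sequence of future sets. -/
def limFuture (ll : M → M → Prop) (Fn : ℕ → Set M) (Q : Set M) : Prop :=
  (∀ x ∈ Q, ∃ N : ℕ, ∀ n > N, x ∈ Fn n) ∧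
  (∀ x : M, ¬ Iplus ll x ⊆ Q → ∃ N : ℕ, ∀ n > N, ¬ Iplus ll x ⊆ Fn n)

/-- Closure in the future boundary. -/
def ClFB (ll : M → M → Prop) (S : Set (Set M × Set M)) : Set (Set M × Set M) :=
  S ∪ {QQ | QQ ∈ Mbar ll ∧ QQ.2 = ∅ ∧
        ∃ Pn : ℕ → Set M × Set M, (∀ n, Pn n ∈ S) ∧ limPast ll (fun n => (Pn n).1) QQ.1}

/-- Closure in the past boundary. -/
def ClPB (ll : M → M → Prop) (S : Set (Set M × Set M)) : Set (Set M × Set M) :=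
  S ∪ {QQ | QQ ∈ Mbar ll ∧ QQ.1 = ∅ ∧
        ∃ Pn : ℕ → Set M × Set M, (∀ n, Pn n ∈ S) ∧ limFuture ll (fun n => (Pn n).2) QQ.2}

/-- `L⁺(S̄) = Cl_FB[S̄ ∪ L⁺_IF(S̄)]`. -/
def Lplus (ll : M → M → Prop) (S : Set (Set M × Set M)) : Set (Set M × Set M) :=
  ClFB ll (S ∪ LplusIF ll S)

/-- `L⁻(S̄) = Cl_PB[S̄ ∪ L⁻_IP(S̄)]`. -/
def Lminus (ll : M → M → Prop) (S : Set (Set M × Set M)) : Set (Set M × Set M) :=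
  ClPB ll (S ∪ LminusIP ll S)

/-- The topology `T̄` on `M̄`: the coarsest topology in which all the sets
`M̄ \ L⁺(S̄)` and `M̄ \ L⁻(S̄)` are open, for `S̄ ⊆ M̄`. -/
def Tbar (ll : M → M → Prop) : TopologicalSpace ↥(Mbar ll) :=
  TopologicalSpace.generateFrom
    {U | ∃ S : Set (Set M × Set M), S ⊆ Mbar ll ∧
      (U = (Subtype.val ⁻¹' Lplus ll S)ᶜ ∨ U = (Subtype.val ⁻¹' Lminus ll S)ᶜ)}

/-- The alternative closure `Cl_+`. -/
def ClPlusAlt (ll : M → M → Prop) (X : Set (Set M × Set M)) : Set (Set M × Set M) :=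
  X ∪ {QQ | QQ ∈ Mbar ll ∧ QQ.1 ≠ ∅ ∧
        ∃ Pn : ℕ → Set M × Set M, (∀ n, Pn n ∈ X) ∧ limPast ll (fun n => (Pn n).1) QQ.1}

/-- The alternative closure `Cl_-`. -/
def ClMinusAlt (ll : M → M → Prop) (X : Set (Set M × Set M)) : Set (Set M × Set M) :=
  X ∪ {QQ | QQ ∈ Mbar ll ∧ QQ.2 ≠ ∅ ∧
        ∃ Pn : ℕ → Set M × Set M, (∀ n, Pn n ∈ X) ∧ limFuture ll (fun n => (Pn n).2) QQ.2}

/-- `L_alt⁺(S̄) = Cl_+[L⁺_IF(S̄)]`. -/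
def LplusAlt (ll : M → M → Prop) (S : Set (Set M × Set M)) : Set (Set M × Set M) :=
  ClPlusAlt ll (LplusIF ll S)

/-- `L_alt⁻(S̄) = Cl_-[L⁻_IP(S̄)]`. -/
def LminusAlt (ll : M → M → Prop) (S : Set (Set M × Set M)) : Set (Set M × Set M) :=
  ClMinusAlt ll (LminusIP ll S)

/-- `L_alt(S̄₁,S̄₂) = Cl_+[L⁻_IP(S̄₁) ∩ L⁺_IF(S̄₂)] ∪ Cl_-[L⁻_IP(S̄₁) ∩ L⁺_IF(S̄₂)]`. -/
def LaltPair (ll : M → M → Prop) (S1 S2 : Set (Set M × Set M)) : Set (Set M × Set M) :=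
  ClPlusAlt ll (LminusIP ll S1 ∩ LplusIF ll S2) ∪
    ClMinusAlt ll (LminusIP ll S1 ∩ LplusIF ll S2)

/-- The alternative topology `T̄_alt` on `M̄`. -/
def TbarAlt (ll : M → M → Prop) : TopologicalSpace ↥(Mbar ll) :=
  TopologicalSpace.generateFrom
    {U | (∃ S : Set (Set M × Set M), S ⊆ Mbar ll ∧
        (U = (Subtype.val ⁻¹' LplusAlt ll S)ᶜ ∨ U = (Subtype.val ⁻¹' LminusAlt ll S)ᶜ)) ∨
      (∃ S1 S2 : Set (Set M × Set M), S1 ⊆ Mbar ll ∧ S2 ⊆ Mbar ll ∧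
        U = (Subtype.val ⁻¹' LaltPair ll S1 S2)ᶜ)}

/-- for `P̄, Q̄ ∈ R_pf` with `P ≠ Q` and `P = I⁻[C]`, it is not the case
that both `Q̄ ∈ L⁻({P̄})` and `Q̄ ∈ L⁺({Φ(x)})` for every `x ∈ C`. -/
theorem not_Lminus_and_all_Lplus (ll : M → M → Prop)
    (htrans : ∀ p q r : M, ll p q → ll q r → ll p r)
    (hirr : ∀ p : M, ¬ ll p p)
    (hphi : ∀ p : M, Phi ll p ∈ Rpf ll)
    (PP QQ : Set M × Set M) (hPP : PP ∈ Rpf ll) (hQQ : QQ ∈ Rpf ll)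
    (hne : PP.1 ≠ QQ.1)
    (C : Set M) (hC : PP.1 = IminusS ll C) :
    ¬ (QQ ∈ Lminus ll {PP} ∧ ∀ x ∈ C, QQ ∈ Lplus ll {Phi ll x}) := by
  rintro ⟨h1, h2⟩
  obtain ⟨hQIP, hQIF, _, _, hQp, hQmax⟩ := hQQ
  have hQsub : QQ.1 ⊆ PP.1 := by
    rcases h1 with (h | h) | h
    · exact absurd (congrArg Prod.fst h).symm hne
    · have := h.2.2
      simpa using this
    · exact absurd h.2.1 hQIP.2.1.ne_empty
  have hfut : ∀ x ∈ C, QQ.2 ⊆ Iplus ll x := by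
    intro x hx
    rcases h2 x hx with (h | h) | h
    · rw [show QQ.2 = Iplus ll x from congrArg Prod.snd h]
    · have := h.2.2
      simpa [Phi] using this
    · exact absurd h.2.1 hQIF.2.1.ne_empty
  apply hQmax
  refine ⟨PP.1, hPP.1, hne, hQsub, ?_⟩
  intro y hy
  rw [hC] at hy
  simp only [IminusS, mem_iUnion] at hy
  obtain ⟨x, hx, hyx⟩ := hy
  simp only [commonPast, mem_iUnion]
  exact ⟨x, hfut x hx, hyx⟩
end

section
/- If Q̄ = (Q, ∅) ∈ M̄ then L⁺({Q̄}) = {Q̄}; dually, if Q̄ = (∅, Q*) ∈ M̄ then L⁻({Q̄}) = {Q̄}. Consequently each such singleton is closed in the topology T̄, and any two distinct points of M̄, each of which has an empty past component or an empty future component, are T₁-separated in T̄: each lies in a T̄-open set not containing the other. -/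
open Set Topology

variable {M : Type*}

lemma limPast_const {ll : M → M → Prop} {Q R : Set M}
    (hQ : IsPastSet ll Q) (h : limPast ll (fun _ => Q) R) : R = Q := by
  obtain ⟨S, rfl⟩ := hQ
  apply Set.Subset.antisymm
  · intro x hx
    obtain ⟨N, hN⟩ := h.1 x hx
    exact hN (N + 1) (Nat.lt_succ_self N)
  · intro x hx
    simp only [IminusS, Set.mem_iUnion] at hx
    obtain ⟨p, hpS, hxp⟩ := hx
    by_contra hxR
    have hsub : ¬ Iminus ll p ⊆ R := fun hs => hxR (hs hxp)
    obtain ⟨N, hN⟩ := h.2 p hsub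
    exact hN (N + 1) (Nat.lt_succ_self N)
      (fun y hy => Set.mem_biUnion hpS hy)

lemma limFuture_const {ll : M → M → Prop} {Q R : Set M}
    (hQ : IsFutureSet ll Q) (h : limFuture ll (fun _ => Q) R) : R = Q := by
  obtain ⟨S, rfl⟩ := hQ
  apply Set.Subset.antisymm
  · intro x hx
    obtain ⟨N, hN⟩ := h.1 x hx
    exact hN (N + 1) (Nat.lt_succ_self N)
  · intro x hx
    simp only [IplusS, Set.mem_iUnion] at hx
    obtain ⟨p, hpS, hxp⟩ := hx
    by_contra hxR
    have hsub : ¬ Iplus ll p ⊆ R := fun hs => hxR (hs hxp)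
    obtain ⟨N, hN⟩ := h.2 p hsub
    exact hN (N + 1) (Nat.lt_succ_self N)
      (fun y hy => Set.mem_biUnion hpS hy)

lemma Mbar_isIP {ll : M → M → Prop} {QQ : Set M × Set M}
    (h : QQ ∈ Mbar ll) (h2 : QQ.2 = ∅) : IsIP ll QQ.1 := by
  rcases h with h | h | h
  · exact absurd h2 h.2.1.2.1.ne_empty
  · exact absurd h2 h.2.1.2.1.ne_empty
  · exact h.2.1

lemma Mbar_isIF {ll : M → M → Prop} {QQ : Set M × Set M}
    (h : QQ ∈ Mbar ll) (h1 : QQ.1 = ∅) : IsIF ll QQ.2 := by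
  rcases h with h | h | h
  · exact absurd h1 h.1.2.1.ne_empty
  · exact h.2.1
  · exact absurd h1 h.2.1.2.1.ne_empty

lemma Lplus_singleton_empty {ll : M → M → Prop} {QQ : Set M × Set M}
    (hQQ : QQ ∈ Mbar ll) (h2 : QQ.2 = ∅) : Lplus ll {QQ} = {QQ} := by
  have hIP := Mbar_isIP hQQ h2
  have hLIF : LplusIF ll {QQ} = ∅ := by
    ext RR
    simp only [LplusIF, Set.mem_setOf_eq, Set.mem_empty_iff_false, iff_false, not_and]
    intro _ hne hsub
    apply hne
    apply Set.eq_empty_of_subset_empty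
    intro y hy
    have hy' := hsub hy
    simpa [h2] using hy'
  apply Set.Subset.antisymm
  · rintro RR (hR | ⟨hM, hR2, Pn, hPn, hlim⟩)
    · rw [hLIF, Set.union_empty] at hR; exact hR
    · have hconst : ∀ n, Pn n = QQ := by
        intro n
        have := hPn n
        rw [hLIF, Set.union_empty] at this
        exact this
      have hfun : (fun n => (Pn n).1) = fun _ => QQ.1 := funext fun n => by rw [hconst n]
      rw [hfun] at hlim
      have h1 : RR.1 = QQ.1 := limPast_const hIP.1 hlim
      have : RR = QQ := Prod.ext h1 (hR2.trans h2.symm)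
      exact this ▸ rfl
  · intro RR hR
    exact Or.inl (Or.inl hR)

lemma Lminus_singleton_empty {ll : M → M → Prop} {QQ : Set M × Set M}
    (hQQ : QQ ∈ Mbar ll) (h1 : QQ.1 = ∅) : Lminus ll {QQ} = {QQ} := by
  have hIF := Mbar_isIF hQQ h1
  have hLIP : LminusIP ll {QQ} = ∅ := by
    ext RR
    simp only [LminusIP, Set.mem_setOf_eq, Set.mem_empty_iff_false, iff_false, not_and]
    intro _ hne hsub
    apply hne
    apply Set.eq_empty_of_subset_empty
    intro y hy
    have hy' := hsub hy
    simpa [h1] using hy'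
  apply Set.Subset.antisymm
  · rintro RR (hR | ⟨hM, hR1, Pn, hPn, hlim⟩)
    · rw [hLIP, Set.union_empty] at hR; exact hR
    · have hconst : ∀ n, Pn n = QQ := by
        intro n
        have := hPn n
        rw [hLIP, Set.union_empty] at this
        exact this
      have hfun : (fun n => (Pn n).2) = fun _ => QQ.2 := funext fun n => by rw [hconst n]
      rw [hfun] at hlim
      have h2 : RR.2 = QQ.2 := limFuture_const hIF.1 hlim
      have : RR = QQ := Prod.ext (hR1.trans h1.symm) h2
      exact this ▸ rfl
  · intro RR hR
    exact Or.inl (Or.inl hR)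

/-- if `Q̄ = (Q,∅) ∈ M̄` then `L⁺({Q̄}) = {Q̄}`, dually for `(∅,Q*)`;
consequently such singletons are `T̄`-closed and any two distinct such points are
`T₁`-separated in `T̄`. -/
theorem empty_component_singleton_closed (ll : M → M → Prop)
    (htrans : ∀ p q r : M, ll p q → ll q r → ll p r)
    (hirr : ∀ p : M, ¬ ll p p) :
    (∀ QQ : Set M × Set M, QQ ∈ Mbar ll → QQ.2 = ∅ → Lplus ll {QQ} = {QQ}) ∧
    (∀ QQ : Set M × Set M, QQ ∈ Mbar ll → QQ.1 = ∅ → Lminus ll {QQ} = {QQ}) ∧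
    (∀ (QQ : Set M × Set M) (hQQ : QQ ∈ Mbar ll), (QQ.1 = ∅ ∨ QQ.2 = ∅) →
      IsClosed[Tbar ll] {(⟨QQ, hQQ⟩ : ↥(Mbar ll))}) ∧
    (∀ (PP QQ : Set M × Set M) (hPP : PP ∈ Mbar ll) (hQQ : QQ ∈ Mbar ll),
      (PP.1 = ∅ ∨ PP.2 = ∅) → (QQ.1 = ∅ ∨ QQ.2 = ∅) → PP ≠ QQ →
      ∃ U V : Set ↥(Mbar ll), IsOpen[Tbar ll] U ∧ IsOpen[Tbar ll] V ∧
        (⟨PP, hPP⟩ : ↥(Mbar ll)) ∈ U ∧ (⟨QQ, hQQ⟩ : ↥(Mbar ll)) ∉ U ∧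
        (⟨QQ, hQQ⟩ : ↥(Mbar ll)) ∈ V ∧ (⟨PP, hPP⟩ : ↥(Mbar ll)) ∉ V) := by
  have hP1 : ∀ QQ : Set M × Set M, QQ ∈ Mbar ll → QQ.2 = ∅ → Lplus ll {QQ} = {QQ} :=
    fun QQ h h2 => Lplus_singleton_empty h h2
  have hP2 : ∀ QQ : Set M × Set M, QQ ∈ Mbar ll → QQ.1 = ∅ → Lminus ll {QQ} = {QQ} :=
    fun QQ h h1 => Lminus_singleton_empty h h1
  have hclosed : ∀ (QQ : Set M × Set M) (hQQ : QQ ∈ Mbar ll), (QQ.1 = ∅ ∨ QQ.2 = ∅) →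
      IsClosed[Tbar ll] {(⟨QQ, hQQ⟩ : ↥(Mbar ll))} := by
    intro QQ hQQ hcase
    have hpre : (Subtype.val ⁻¹' ({QQ} : Set (Set M × Set M)) : Set ↥(Mbar ll))
        = {⟨QQ, hQQ⟩} := by
      ext x; simp [Subtype.ext_iff]
    rcases hcase with h1 | h2
    · have hL := hP2 QQ hQQ h1
      have hopen : IsOpen[Tbar ll] ({(⟨QQ, hQQ⟩ : ↥(Mbar ll))}ᶜ) := by
        have heq : ({(⟨QQ, hQQ⟩ : ↥(Mbar ll))}ᶜ : Set ↥(Mbar ll))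
            = (Subtype.val ⁻¹' Lminus ll {QQ})ᶜ := by
          rw [hL, hpre]
        rw [heq]
        exact TopologicalSpace.GenerateOpen.basic _
          ⟨{QQ}, Set.singleton_subset_iff.mpr hQQ, Or.inr rfl⟩
      exact @IsClosed.mk _ (Tbar ll) _ hopen
    · have hL := hP1 QQ hQQ h2
      have hopen : IsOpen[Tbar ll] ({(⟨QQ, hQQ⟩ : ↥(Mbar ll))}ᶜ) := by
        have heq : ({(⟨QQ, hQQ⟩ : ↥(Mbar ll))}ᶜ : Set ↥(Mbar ll))
            = (Subtype.val ⁻¹' Lplus ll {QQ})ᶜ := by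
          rw [hL, hpre]
        rw [heq]
        exact TopologicalSpace.GenerateOpen.basic _
          ⟨{QQ}, Set.singleton_subset_iff.mpr hQQ, Or.inl rfl⟩
      exact @IsClosed.mk _ (Tbar ll) _ hopen
  refine ⟨hP1, hP2, hclosed, ?_⟩
  intro PP QQ hPP hQQ hPc hQc hne
  refine ⟨{(⟨QQ, hQQ⟩ : ↥(Mbar ll))}ᶜ, {(⟨PP, hPP⟩ : ↥(Mbar ll))}ᶜ,
    @IsClosed.isOpen_compl _ (Tbar ll) _ (hclosed QQ hQQ hQc), @IsClosed.isOpen_compl _ (Tbar ll) _ (hclosed PP hPP hPc), ?_, ?_, ?_, ?_⟩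
  · simp [Subtype.ext_iff, hne]
  · simp
  · simp [Subtype.ext_iff, Ne.symm hne]
  · simp
end

section
/- Assume (I⁻(p), I⁺(p)) ∈ R_pf for every p ∈ M, and assume that for each p ∈ M, I⁻(p) and I⁺(p) occur in no pair of R_pf other than (I⁻(p), I⁺(p)). Then for each p ∈ M: L⁻_IP({Φ(p)}) ∩ L⁺_IF({Φ(p)}) = {Φ(p)}, and L_alt({Φ(p)},{Φ(p)}) = {Φ(p)}. Consequently the singleton {Φ(p)} is closed in the topology T̄_alt. -/
open Set Topology

variable {M : Type*}

/-- if each `I⁻(p)`, `I⁺(p)` occurs in no pair of `R_pf` other than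
`Φ(p) = (I⁻(p), I⁺(p))`, then `L⁻_IP({Φ(p)}) ∩ L⁺_IF({Φ(p)}) = {Φ(p)}` and
`L_alt({Φ(p)},{Φ(p)}) = {Φ(p)}`; consequently `{Φ(p)}` is closed in `T̄_alt`. -/
theorem phi_singleton_closed_alt (ll : M → M → Prop)
    (htrans : ∀ p q r : M, ll p q → ll q r → ll p r)
    (hirr : ∀ p : M, ¬ ll p p)
    (hphi : ∀ p : M, Phi ll p ∈ Rpf ll)
    (huniq : ∀ (p : M) (PP : Set M × Set M), PP ∈ Rpf ll →
      (PP.1 = Iminus ll p ∨ PP.2 = Iplus ll p) → PP = Phi ll p) :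
    ∀ p : M,
      LminusIP ll {Phi ll p} ∩ LplusIF ll {Phi ll p} = {Phi ll p} ∧
      LaltPair ll {Phi ll p} {Phi ll p} = {Phi ll p} ∧
      IsClosed[TbarAlt ll] {(⟨Phi ll p, Or.inl (hphi p)⟩ : ↥(Mbar ll))} := by
  intro p
  have hmem : Phi ll p ∈ Mbar ll := Or.inl (hphi p)
  have hIP : IsIP ll (Iminus ll p) := (hphi p).1
  have hIF : IsIF ll (Iplus ll p) := (hphi p).2.1
  have hPne : (Iminus ll p) ≠ ∅ := hIP.2.1.ne_empty
  have hFne : (Iplus ll p) ≠ ∅ := hIF.2.1.ne_empty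
  -- Part 1
  have h1 : LminusIP ll {Phi ll p} ∩ LplusIF ll {Phi ll p} = {Phi ll p} := by
    apply Set.eq_singleton_iff_unique_mem.mpr
    refine ⟨⟨⟨hmem, hPne, by simp [Phi]⟩, ⟨hmem, hFne, by simp [Phi]⟩⟩, ?_⟩
    rintro QQ ⟨⟨hQM, hQ1ne, hQ1sub⟩, ⟨-, hQ2ne, hQ2sub⟩⟩
    have hQ1 : QQ.1 ⊆ Iminus ll p := by simpa [Phi] using hQ1sub
    have hQ2 : QQ.2 ⊆ Iplus ll p := by simpa [Phi] using hQ2sub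
    have hRpf : QQ ∈ Rpf ll := by
      rcases hQM with h | h | h
      · exact h
      · exact absurd h.1 hQ1ne
      · exact absurd h.1 hQ2ne
    have hsubCF : Iplus ll p ⊆ commonFuture ll QQ.1 := fun y hy =>
      Set.mem_biUnion hQ1 hy
    by_cases heq : Iplus ll p = QQ.2
    · exact huniq p QQ hRpf (Or.inr heq.symm)
    · exact absurd ⟨Iplus ll p, hIF, heq, hQ2, hsubCF⟩ hRpf.2.2.2.1
  -- key: QQ.1 = Iminus ll p and QQ ∈ Mbar implies QQ = Phi ll p
  have hkey1 : ∀ QQ : Set M × Set M, QQ ∈ Mbar ll → QQ.1 = Iminus ll p →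
      QQ = Phi ll p := by
    intro QQ hQM hQ1
    rcases hQM with h | h | h
    · exact huniq p QQ h (Or.inl hQ1)
    · exact absurd (h.1 ▸ hQ1).symm hPne
    · exact absurd ⟨Iplus ll p, hQ1 ▸ hphi p⟩ h.2.2
  have hkey2 : ∀ QQ : Set M × Set M, QQ ∈ Mbar ll → QQ.2 = Iplus ll p →
      QQ = Phi ll p := by
    intro QQ hQM hQ2
    rcases hQM with h | h | h
    · exact huniq p QQ h (Or.inr hQ2)
    · exact absurd ⟨Iminus ll p, hQ2 ▸ hphi p⟩ h.2.2
    · exact absurd (h.1 ▸ hQ2).symm hFne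
  -- Part 2
  have h2 : LaltPair ll {Phi ll p} {Phi ll p} = {Phi ll p} := by
    unfold LaltPair
    rw [h1]
    apply Set.eq_singleton_iff_unique_mem.mpr
    constructor
    · exact Or.inl (Or.inl rfl)
    · rintro QQ (h | h)
      · rcases h with h | ⟨hQM, hQ1ne, Pn, hPn, hlim⟩
        · exact h
        · -- limPast of constant sequence I⁻(p)
          have hPn' : ∀ n, Pn n = Phi ll p := fun n => hPn n
          have hle : QQ.1 ⊆ Iminus ll p := by
            intro x hx
            obtain ⟨N, hN⟩ := hlim.1 x hx
            have h := hN (N + 1) (Nat.lt_succ_self N)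
            have h' : x ∈ (Pn (N + 1)).1 := h
            rw [hPn' (N + 1)] at h'
            exact h'
          have hge : Iminus ll p ⊆ QQ.1 := by
            by_contra hc
            obtain ⟨N, hN⟩ := hlim.2 p hc
            refine hN (N + 1) (Nat.lt_succ_self N) ?_
            show Iminus ll p ⊆ (Pn (N + 1)).1
            rw [hPn' (N + 1)]
            exact subset_rfl
          exact hkey1 QQ hQM (Subset.antisymm hle hge)
      · rcases h with h | ⟨hQM, hQ2ne, Pn, hPn, hlim⟩
        · exact h
        · have hPn' : ∀ n, Pn n = Phi ll p := fun n => hPn n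
          have hle : QQ.2 ⊆ Iplus ll p := by
            intro x hx
            obtain ⟨N, hN⟩ := hlim.1 x hx
            have h := hN (N + 1) (Nat.lt_succ_self N)
            have h' : x ∈ (Pn (N + 1)).2 := h
            rw [hPn' (N + 1)] at h'
            exact h'
          have hge : Iplus ll p ⊆ QQ.2 := by
            by_contra hc
            obtain ⟨N, hN⟩ := hlim.2 p hc
            refine hN (N + 1) (Nat.lt_succ_self N) ?_
            show Iplus ll p ⊆ (Pn (N + 1)).2
            rw [hPn' (N + 1)]
            exact subset_rfl
          exact hkey2 QQ hQM (Subset.antisymm hle hge)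
  refine ⟨h1, h2, ?_⟩
  -- Part 3: closedness
  have hopen : IsOpen[TbarAlt ll]
      ((Subtype.val ⁻¹' LaltPair ll {Phi ll p} {Phi ll p})ᶜ) :=
    TopologicalSpace.GenerateOpen.basic _
      (Or.inr ⟨{Phi ll p}, {Phi ll p}, Set.singleton_subset_iff.mpr hmem,
        Set.singleton_subset_iff.mpr hmem, rfl⟩)
  have hcompl : (Subtype.val ⁻¹' LaltPair ll {Phi ll p} {Phi ll p})ᶜ
      = ({(⟨Phi ll p, Or.inl (hphi p)⟩ : ↥(Mbar ll))} : Set ↥(Mbar ll))ᶜ := by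
    rw [h2]
    congr 1
    ext x
    simp [Subtype.ext_iff]
  exact @IsClosed.mk _ (TbarAlt ll) _ (hcompl ▸ hopen)
end
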